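/- arXiv:math/0603411 — 2 statements merged into one kernel-verified Lean document; each statement's English description precedes it below -/
import Mathlib

section
/- For every n ≥ 1 and all positive real numbers a₁,b₁,…,a_n,b_n with ∏_{i=1}^n a_i b_i = 1, the linear cylindrical capacity of the image D·B₁^{2n} of the cross-polytope B₁^{2n} = conv{±e₁,…,±e_{2n}} under the diagonal matrix D = diag(a₁,b₁,…,a_n,b_n) satisfies c^Z_lin(D·B₁^{2n}) ≤ π/n. -/
open MeasureTheory Metric
open scoped BigOperators

noncomputable section

/-- A convex body: compact convex set with nonempty interior. -/
def IsConvexBody {d : ℕ} (K : Set (EuclideanSpace ℝ (Fin d))) : Prop :=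
  IsCompact K ∧ Convex ℝ K ∧ (interior K).Nonempty

/-- The standard symplectic form on `ℝ^{2n}` with coordinates ordered
`(x₁, y₁, …, xₙ, yₙ)`: `ω = ∑ dxⱼ ∧ dyⱼ`. -/
def symplForm (n : ℕ) (u v : EuclideanSpace ℝ (Fin (2 * n))) : ℝ :=
  ∑ j : Fin n,
    (u ⟨2 * (j : ℕ), by have := j.isLt; omega⟩ * v ⟨2 * (j : ℕ) + 1, by have := j.isLt; omega⟩
      - u ⟨2 * (j : ℕ) + 1, by have := j.isLt; omega⟩ * v ⟨2 * (j : ℕ), by have := j.isLt; omega⟩)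

/-- A linear map of `ℝ^{2n}` is symplectic if it preserves the standard symplectic form. -/
def IsLinearSymplectic (n : ℕ)
    (S : EuclideanSpace ℝ (Fin (2 * n)) →ₗ[ℝ] EuclideanSpace ℝ (Fin (2 * n))) : Prop :=
  ∀ u v, symplForm n (S u) (S v) = symplForm n u v

/-- The `k`-th coordinate of a vector (with value `0` if `k` is out of range). -/
def coordOr {m : ℕ} (x : EuclideanSpace ℝ (Fin m)) (k : ℕ) : ℝ :=
  if h : k < m then x ⟨k, h⟩ else 0

/-- The open symplectic cylinder `Z(r) = {x : x₁² + x₂² < r²}`. -/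
def symplCylinder (n : ℕ) (r : ℝ) : Set (EuclideanSpace ℝ (Fin (2 * n))) :=
  {x | coordOr x 0 ^ 2 + coordOr x 1 ^ 2 < r ^ 2}

/-- The linear cylindrical capacity. -/
def linCylCapacity (n : ℕ) (U : Set (EuclideanSpace ℝ (Fin (2 * n)))) : ℝ :=
  sInf {c : ℝ | ∃ r : ℝ, 0 < r ∧ c = Real.pi * r ^ 2 ∧
    ∃ S : EuclideanSpace ℝ (Fin (2 * n)) →ₗ[ℝ] EuclideanSpace ℝ (Fin (2 * n)),
      IsLinearSymplectic n S ∧ S '' U ⊆ symplCylinder n r}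

/-- The linear symplectic radius. -/
def linSymplRadius (n : ℕ) (U : Set (EuclideanSpace ℝ (Fin (2 * n)))) : ℝ :=
  sSup {c : ℝ | ∃ r : ℝ, 0 < r ∧ c = Real.pi * r ^ 2 ∧
    ∃ S : EuclideanSpace ℝ (Fin (2 * n)) →ₗ[ℝ] EuclideanSpace ℝ (Fin (2 * n)),
      IsLinearSymplectic n S ∧ S '' (closedBall (0 : EuclideanSpace ℝ (Fin (2 * n))) r) ⊆ U}

/-- The standard complex structure `J` on `ℝ^{2n}`, sending
`(x₁,y₁,…,xₙ,yₙ)` to `(−y₁,x₁,…,−yₙ,xₙ)`. -/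
def Jstd (n : ℕ) (x : EuclideanSpace ℝ (Fin (2 * n))) : EuclideanSpace ℝ (Fin (2 * n)) :=
  WithLp.toLp 2 (fun i : Fin (2 * n) => if h : (i : ℕ) % 2 = 0
    then - x ⟨(i : ℕ) + 1, by have := i.isLt; omega⟩
    else x ⟨(i : ℕ) - 1, by have := i.isLt; omega⟩)

/-- The support function `x ↦ sup_{y ∈ K} ⟨x, y⟩`. -/
def suppF {d : ℕ} (K : Set (EuclideanSpace ℝ (Fin d))) (x : EuclideanSpace ℝ (Fin d)) : ℝ :=
  sSup ((fun y => (inner ℝ x y : ℝ)) '' K)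

/-- The sign vector `ε ∈ {−1/√(2n), 1/√(2n)}^{2n}` associated to `ε : Fin (2n) → Bool`. -/
def signVec (n : ℕ) (ε : Fin (2 * n) → Bool) : EuclideanSpace ℝ (Fin (2 * n)) :=
  WithLp.toLp 2 (fun i : Fin (2 * n) => (if ε i then 1 else -1) / Real.sqrt (2 * n))

/-- The normalized Rademacher average `s*(K)`. -/
def sStar (n : ℕ) (K : Set (EuclideanSpace ℝ (Fin (2 * n)))) : ℝ :=
  (1 / 2 ^ (2 * n)) * ∑ ε : Fin (2 * n) → Bool, suppF K (signVec n ε)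

/-- The rotation-invariant probability measure on the unit sphere of `ℝ^{2n}`. -/
def sphereProb (n : ℕ) : Measure (sphere (0 : EuclideanSpace ℝ (Fin (2 * n))) 1) :=
  ((volume : Measure (EuclideanSpace ℝ (Fin (2 * n)))).toSphere Set.univ)⁻¹ •
    (volume : Measure (EuclideanSpace ℝ (Fin (2 * n)))).toSphere

/-- Half the mean width `M*(K)`. -/
def mStar (n : ℕ) (K : Set (EuclideanSpace ℝ (Fin (2 * n)))) : ℝ :=
  ∫ x : sphere (0 : EuclideanSpace ℝ (Fin (2 * n))) 1, suppF K (x : EuclideanSpace ℝ (Fin (2 * n))) ∂(sphereProb n)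

/-- The sign `±1` of a boolean. -/
def radSign (b : Bool) : ℝ := if b then 1 else -1

/-- Squared `L²({−1,1}^m, μ; X_K)`-norm of `f`, with respect to the norm
(Minkowski gauge) whose unit ball is `K` and the uniform probability measure `μ`. -/
def radL2Sq {d : ℕ} (m : ℕ) (K : Set (EuclideanSpace ℝ (Fin d)))
    (f : (Fin m → Bool) → EuclideanSpace ℝ (Fin d)) : ℝ :=
  (1 / 2 ^ m) * ∑ t : Fin m → Bool, gauge K (f t) ^ 2

/-- The Rademacher projection `R_m f = ∑ᵢ (∫ f rᵢ dμ) rᵢ`. -/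
def radProj {d : ℕ} (m : ℕ) (f : (Fin m → Bool) → EuclideanSpace ℝ (Fin d)) :
    (Fin m → Bool) → EuclideanSpace ℝ (Fin d) :=
  fun t => ∑ i : Fin m,
    radSign (t i) • ((1 / 2 ^ m : ℝ) • ∑ s : Fin m → Bool, radSign (s i) • f s)

/-- The Rademacher projection (K-convexity) constant `‖Rad‖_{X_K}` of the normed
space whose unit ball is `K`: `sup_m ‖R_m‖`. -/
def radConst {d : ℕ} (K : Set (EuclideanSpace ℝ (Fin d))) : ℝ :=
  sSup {c : ℝ | ∃ m : ℕ, ∃ f : (Fin m → Bool) → EuclideanSpace ℝ (Fin d),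
    radL2Sq m K f ≤ 1 ∧ c = Real.sqrt (radL2Sq m K (radProj m f))}

/-- Volume ratio `Vol(K)/Vol(B^{2n})`. -/
def volRatio {d : ℕ} (K : Set (EuclideanSpace ℝ (Fin d))) : ℝ :=
  (volume K).toReal / (volume (closedBall (0 : EuclideanSpace ℝ (Fin d)) 1)).toReal


/-- The cross-polytope `B₁^m = conv{±e₁,…,±e_m}`, the unit ball of the `ℓ₁`-norm. -/
def crossPolytope (m : ℕ) : Set (EuclideanSpace ℝ (Fin m)) :=
  convexHull ℝ {x : EuclideanSpace ℝ (Fin m) |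
    ∃ i : Fin m, x = EuclideanSpace.single i (1 : ℝ) ∨ x = -EuclideanSpace.single i (1 : ℝ)}

/-- The diagonal map `D = diag(a₁,b₁,…,aₙ,bₙ)` acting on `ℝ^{2n}`. -/
def diagGen (n : ℕ) (a b : Fin n → ℝ) (x : EuclideanSpace ℝ (Fin (2 * n))) :
    EuclideanSpace ℝ (Fin (2 * n)) :=
  WithLp.toLp 2 (fun i : Fin (2 * n) => (if (i : ℕ) % 2 = 0 then a ⟨(i : ℕ) / 2, by have := i.isLt; omega⟩
    else b ⟨(i : ℕ) / 2, by have := i.isLt; omega⟩) * x i)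

namespace Stmt15Aux

/-- The "even part" vector `(c₁ x₁, …, cₙ x_{2n-1})`. -/
def Xv (n : ℕ) (c : Fin n → ℝ) (x : EuclideanSpace ℝ (Fin (2 * n))) :
    EuclideanSpace ℝ (Fin n) :=
  WithLp.toLp 2 (fun k : Fin n => c k * x ⟨2 * (k : ℕ), by have := k.isLt; omega⟩)

/-- The "odd part" vector `(x₂/c₁, …, x_{2n}/cₙ)`. -/
def Yv (n : ℕ) (c : Fin n → ℝ) (x : EuclideanSpace ℝ (Fin (2 * n))) :
    EuclideanSpace ℝ (Fin n) :=
  WithLp.toLp 2 (fun k : Fin n => x ⟨2 * (k : ℕ) + 1, by have := k.isLt; omega⟩ / c k)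

variable {n : ℕ}

lemma Xv_add (c : Fin n → ℝ) (x y : EuclideanSpace ℝ (Fin (2 * n))) :
    Xv n c (x + y) = Xv n c x + Xv n c y := by
  ext k; simp [Xv, PiLp.add_apply]; ring

lemma Yv_add (c : Fin n → ℝ) (x y : EuclideanSpace ℝ (Fin (2 * n))) :
    Yv n c (x + y) = Yv n c x + Yv n c y := by
  ext k; simp [Yv, PiLp.add_apply]; ring

lemma Xv_smul (c : Fin n → ℝ) (t : ℝ) (x : EuclideanSpace ℝ (Fin (2 * n))) :
    Xv n c (t • x) = t • Xv n c x := by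
  ext k; simp [Xv, PiLp.smul_apply]; ring

lemma Yv_smul (c : Fin n → ℝ) (t : ℝ) (x : EuclideanSpace ℝ (Fin (2 * n))) :
    Yv n c (t • x) = t • Yv n c x := by
  ext k; simp [Yv, PiLp.smul_apply]; ring

/-- The symplectic map built from a scaling `c` and an isometry `f`. -/
def Smap (n : ℕ) (c : Fin n → ℝ)
    (f : EuclideanSpace ℝ (Fin n) ≃ₗᵢ[ℝ] EuclideanSpace ℝ (Fin n)) :
    EuclideanSpace ℝ (Fin (2 * n)) →ₗ[ℝ] EuclideanSpace ℝ (Fin (2 * n)) where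
  toFun x := WithLp.toLp 2 (fun i : Fin (2 * n) => if (i : ℕ) % 2 = 0
    then f (Xv n c x) ⟨(i : ℕ) / 2, by have := i.isLt; omega⟩
    else f (Yv n c x) ⟨(i : ℕ) / 2, by have := i.isLt; omega⟩)
  map_add' x y := by
    ext i
    by_cases h : (i : ℕ) % 2 = 0 <;>
      simp [h, Xv_add, Yv_add, PiLp.add_apply]
  map_smul' t x := by
    ext i
    by_cases h : (i : ℕ) % 2 = 0 <;>
      simp [h, Xv_smul, Yv_smul, PiLp.smul_apply]

lemma Smap_apply (c : Fin n → ℝ)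
    (f : EuclideanSpace ℝ (Fin n) ≃ₗᵢ[ℝ] EuclideanSpace ℝ (Fin n))
    (x : EuclideanSpace ℝ (Fin (2 * n))) (i : Fin (2 * n)) :
    Smap n c f x i = if (i : ℕ) % 2 = 0
      then f (Xv n c x) ⟨(i : ℕ) / 2, by have := i.isLt; omega⟩
      else f (Yv n c x) ⟨(i : ℕ) / 2, by have := i.isLt; omega⟩ := rfl

lemma Smap_even (c : Fin n → ℝ)
    (f : EuclideanSpace ℝ (Fin n) ≃ₗᵢ[ℝ] EuclideanSpace ℝ (Fin n))
    (x : EuclideanSpace ℝ (Fin (2 * n))) (k : Fin n) (hk : 2 * (k : ℕ) < 2 * n) :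
    Smap n c f x ⟨2 * (k : ℕ), hk⟩ = f (Xv n c x) k := by
  rw [Smap_apply, if_pos (by omega : 2 * (k : ℕ) % 2 = 0)]
  have h2 : 2 * (k : ℕ) / 2 = (k : ℕ) := by omega
  exact congrArg _ (Fin.ext h2)

lemma Smap_odd (c : Fin n → ℝ)
    (f : EuclideanSpace ℝ (Fin n) ≃ₗᵢ[ℝ] EuclideanSpace ℝ (Fin n))
    (x : EuclideanSpace ℝ (Fin (2 * n))) (k : Fin n) (hk : 2 * (k : ℕ) + 1 < 2 * n) :
    Smap n c f x ⟨2 * (k : ℕ) + 1, hk⟩ = f (Yv n c x) k := by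
  rw [Smap_apply, if_neg (by omega : ¬ (2 * (k : ℕ) + 1) % 2 = 0)]
  have h2 : (2 * (k : ℕ) + 1) / 2 = (k : ℕ) := by omega
  exact congrArg _ (Fin.ext h2)

lemma hinner (X Y : EuclideanSpace ℝ (Fin n)) : (inner ℝ X Y : ℝ) = ∑ k, X k * Y k := by
  simp [PiLp.inner_apply, RCLike.inner_apply, conj_trivial, mul_comm]

lemma Smap_symplectic (c : Fin n → ℝ) (hc : ∀ k, c k ≠ 0)
    (f : EuclideanSpace ℝ (Fin n) ≃ₗᵢ[ℝ] EuclideanSpace ℝ (Fin n)) :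
    IsLinearSymplectic n (Smap n c f) := by
  intro u v
  have key : ∀ X Y : EuclideanSpace ℝ (Fin n),
      ∑ j : Fin n, f X j * f Y j = ∑ j : Fin n, X j * Y j := by
    intro X Y
    rw [← hinner, ← hinner, f.inner_map_map]
  unfold symplForm
  simp only [Smap_even, Smap_odd]
  rw [Finset.sum_sub_distrib, Finset.sum_sub_distrib, key, key]
  congr 1 <;>
  · apply Finset.sum_congr rfl
    intro k _
    unfold Xv Yv
    field_simp [hc k]
    try ring

lemma cyl_convex (n : ℕ) (r : ℝ) : Convex ℝ (symplCylinder n r) := by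
  intro x hx y hy p q hp hq hpq
  simp only [symplCylinder, Set.mem_setOf_eq] at hx hy ⊢
  have hco : ∀ k : ℕ, coordOr (p • x + q • y) k = p * coordOr x k + q * coordOr y k := by
    intro k
    unfold coordOr
    split
    · simp [PiLp.add_apply, PiLp.smul_apply]
    · ring
  rw [hco, hco]
  have hq' : q = 1 - p := by linarith
  rw [hq']
  rcases eq_or_lt_of_le hp with hp0 | hp0
  · rw [← hp0]
    norm_num
    exact hy
  · have hp1 : (0 : ℝ) ≤ 1 - p := by linarith
    have h1 : p * (coordOr x 0 ^ 2 + coordOr x 1 ^ 2) < p * r ^ 2 :=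
      mul_lt_mul_of_pos_left hx hp0
    have h2 : (1 - p) * (coordOr y 0 ^ 2 + coordOr y 1 ^ 2) ≤ (1 - p) * r ^ 2 :=
      mul_le_mul_of_nonneg_left hy.le hp1
    nlinarith [mul_nonneg (mul_nonneg hp0.le hp1)
      (add_nonneg (sq_nonneg (coordOr x 0 - coordOr y 0))
        (sq_nonneg (coordOr x 1 - coordOr y 1)))]

/-- `diagGen` as a linear map. -/
def diagLin (n : ℕ) (a b : Fin n → ℝ) :
    EuclideanSpace ℝ (Fin (2 * n)) →ₗ[ℝ] EuclideanSpace ℝ (Fin (2 * n)) where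
  toFun := diagGen n a b
  map_add' x y := by
    ext i
    by_cases h : (i : ℕ) % 2 = 0 <;> simp [diagGen, h, PiLp.add_apply] <;> ring
  map_smul' t x := by
    ext i
    by_cases h : (i : ℕ) % 2 = 0 <;> simp [diagGen, h, PiLp.smul_apply] <;> ring

lemma coordOr_neg {m : ℕ} (y : EuclideanSpace ℝ (Fin m)) (k : ℕ) :
    coordOr (-y) k = - coordOr y k := by
  unfold coordOr
  split
  · simp [PiLp.neg_apply]
  · ring

lemma core (n : ℕ) (hn : 0 < n) (a b : Fin n → ℝ) (ha : ∀ i, 0 < a i) (hb : ∀ i, 0 < b i)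
    (hprod : (∏ i, a i * b i) = 1) (r : ℝ) (hr2 : 1 / (n : ℝ) < r ^ 2) :
    ∃ S : EuclideanSpace ℝ (Fin (2 * n)) →ₗ[ℝ] EuclideanSpace ℝ (Fin (2 * n)),
      IsLinearSymplectic n S ∧
      S '' (diagGen n a b '' crossPolytope (2 * n)) ⊆ symplCylinder n r := by
  have h01 : 0 < 2 * n := by omega
  have h11 : 1 < 2 * n := by omega
  have hab : ∀ k, 0 < a k * b k := fun k => mul_pos (ha k) (hb k)
  set W : ℝ := ∑ k : Fin n, (a k * b k)⁻¹ with hWdef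
  have hprodinv : (∏ k : Fin n, (a k * b k)⁻¹) = 1 := by
    rw [Finset.prod_inv_distrib, hprod, inv_one]
  have hWn : (n : ℝ) ≤ W := by
    have hsum1 : ∑ _k : Fin n, (1 : ℝ) = n := by simp
    have h := Real.geom_mean_le_arith_mean (Finset.univ : Finset (Fin n)) (fun _ => (1 : ℝ))
      (fun k => (a k * b k)⁻¹) (fun _ _ => zero_le_one)
      (by rw [hsum1]; exact_mod_cast hn) (fun k _ => (inv_pos.2 (hab k)).le)
    rw [hsum1] at h
    have hz : (∏ k : Fin n, ((a k * b k)⁻¹) ^ (1 : ℝ)) = 1 := by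
      simp only [Real.rpow_one]; exact hprodinv
    rw [hz, Real.one_rpow] at h
    have h1 : (1 : ℝ) ≤ W / n := by simpa [hWdef] using h
    have hn0 : (0 : ℝ) < n := by exact_mod_cast hn
    calc (n : ℝ) = n * 1 := by ring
    _ ≤ n * (W / n) := by exact mul_le_mul_of_nonneg_left h1 hn0.le
    _ = W := by field_simp
  have hW0 : (0 : ℝ) < W := lt_of_lt_of_le (by exact_mod_cast hn) hWn
  set z0 : Fin n := ⟨0, hn⟩ with hz0
  set u : EuclideanSpace ℝ (Fin n) :=
    (WithLp.toLp 2 (fun k => (Real.sqrt (a k * b k) * Real.sqrt W)⁻¹) : EuclideanSpace ℝ (Fin n)) with hu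
  have hsq : ∀ k, Real.sqrt (a k * b k) ^ 2 = a k * b k := fun k => Real.sq_sqrt (hab k).le
  have hsqpos : ∀ k, 0 < Real.sqrt (a k * b k) := fun k => Real.sqrt_pos.2 (hab k)
  have hWsq : Real.sqrt W ^ 2 = W := Real.sq_sqrt hW0.le
  have hWspos : 0 < Real.sqrt W := Real.sqrt_pos.2 hW0
  have huk : ∀ k, u k = (Real.sqrt (a k * b k) * Real.sqrt W)⁻¹ := fun k => rfl
  have hunorm : ‖u‖ = 1 := by
    rw [EuclideanSpace.norm_eq]
    have hterm : ∀ k : Fin n, ‖u k‖ ^ 2 = (a k * b k)⁻¹ * W⁻¹ := by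
      intro k
      rw [Real.norm_eq_abs, sq_abs, huk, inv_pow, mul_pow, hsq, hWsq, mul_inv]
    rw [Finset.sum_congr rfl (fun k _ => hterm k), ← Finset.sum_mul, ← hWdef,
      mul_inv_cancel₀ hW0.ne', Real.sqrt_one]
  set f := Submodule.reflection (ℝ ∙ (u - EuclideanSpace.single z0 (1 : ℝ)))ᗮ with hf
  have hfu : f u = EuclideanSpace.single z0 1 :=
    Submodule.reflection_sub (by rw [hunorm, EuclideanSpace.norm_single]; norm_num)
  have hfz : ∀ wv : EuclideanSpace ℝ (Fin n), f wv z0 = (inner ℝ wv u : ℝ) := by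
    intro wv
    have h1 : (inner ℝ (f wv) (EuclideanSpace.single z0 (1 : ℝ)) : ℝ) = f wv z0 := by
      rw [EuclideanSpace.inner_single_right]
      simp only [map_one, one_mul, conj_trivial]
    rw [← h1, ← hfu, f.inner_map_map]
  set c : Fin n → ℝ := fun k => Real.sqrt (b k / a k) with hcdef
  have hcpos : ∀ k, 0 < c k := fun k => Real.sqrt_pos.2 (div_pos (hb k) (ha k))
  have hca : ∀ k, c k * a k = Real.sqrt (a k * b k) := by
    intro k
    have h1 : c k * a k = Real.sqrt ((b k / a k) * (a k) ^ 2) := by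
      rw [Real.sqrt_mul (div_pos (hb k) (ha k)).le, Real.sqrt_sq (ha k).le]
    rw [h1]
    congr 1
    field_simp [(ha k).ne']
    try ring
  have hbc : ∀ k, b k / c k = Real.sqrt (a k * b k) := by
    intro k
    have h1 : b k / c k = Real.sqrt ((b k) ^ 2 / (b k / a k)) := by
      rw [Real.sqrt_div (sq_nonneg (b k)), Real.sqrt_sq (hb k).le]
    rw [h1]
    congr 1
    field_simp [(ha k).ne', (hb k).ne']
    try ring
  have habu : ∀ k, Real.sqrt (a k * b k) * u k = (Real.sqrt W)⁻¹ := by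
    intro k
    rw [huk, mul_inv, ← mul_assoc, mul_inv_cancel₀ (hsqpos k).ne', one_mul]
  refine ⟨Smap n c f, Smap_symplectic c (fun k => (hcpos k).ne') f, ?_⟩
  set L := (Smap n c f).comp (diagLin n a b) with hL
  -- coordinates 0 and 1 of `L x`
  have hL0 : ∀ x : EuclideanSpace ℝ (Fin (2 * n)),
      L x ⟨0, h01⟩ = (inner ℝ (Xv n c (diagGen n a b x)) u : ℝ) := by
    intro x
    have h1 : L x ⟨0, h01⟩ = f (Xv n c (diagGen n a b x)) ⟨0, hn⟩ := by
      rw [hL, LinearMap.comp_apply, Smap_apply,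
        if_pos (show ((⟨0, h01⟩ : Fin (2 * n)) : ℕ) % 2 = 0 from rfl)]
      exact congrArg _ (Fin.ext (show ((0 : ℕ) / 2 = 0) from rfl))
    rw [h1, ← hz0, hfz]
  have hL1 : ∀ x : EuclideanSpace ℝ (Fin (2 * n)),
      L x ⟨1, h11⟩ = (inner ℝ (Yv n c (diagGen n a b x)) u : ℝ) := by
    intro x
    have h1 : L x ⟨1, h11⟩ = f (Yv n c (diagGen n a b x)) ⟨0, hn⟩ := by
      rw [hL, LinearMap.comp_apply, Smap_apply,
        if_neg (show ¬ ((1 : ℕ) % 2 = 0) by omega)]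
      exact congrArg _ (Fin.ext (show ((1 : ℕ) / 2 = 0) from rfl))
    rw [h1, ← hz0, hfz]
  -- values on the vertices
  have hXval : ∀ i : Fin (2 * n),
      (inner ℝ (Xv n c (diagGen n a b (EuclideanSpace.single i 1))) u : ℝ)
      = if (i : ℕ) % 2 = 0 then (Real.sqrt W)⁻¹ else 0 := by
    intro i
    rw [hinner]
    have hterm : ∀ k : Fin n,
        Xv n c (diagGen n a b (EuclideanSpace.single i 1)) k * u k
        = if (⟨2 * (k : ℕ), by have := k.isLt; omega⟩ : Fin (2 * n)) = i
          then (Real.sqrt W)⁻¹ else 0 := by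
      intro k
      unfold Xv diagGen
      simp only [PiLp.toLp_apply]
      rw [if_pos (by omega : 2 * (k : ℕ) % 2 = 0)]
      rw [EuclideanSpace.single_apply]
      have hdd : 2 * (k : ℕ) / 2 = (k : ℕ) := by omega
      have hdiv : (⟨2 * (k : ℕ) / 2, by have := k.isLt; omega⟩ : Fin n) = k :=
        Fin.ext hdd
      rw [hdiv]
      split
      · rw [mul_one, hca, habu]
      · ring
    rw [Finset.sum_congr rfl (fun k _ => hterm k)]
    by_cases hpar : (i : ℕ) % 2 = 0
    · rw [if_pos hpar]
      have hm : (i : ℕ) / 2 < n := by have := i.isLt; omega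
      rw [Finset.sum_eq_single (⟨(i : ℕ) / 2, hm⟩ : Fin n)]
      · rw [if_pos (Fin.ext (show 2 * ((i : ℕ) / 2) = (i : ℕ) by omega))]
      · intro k _ hk
        rw [if_neg]
        intro hcon
        have hv : 2 * (k : ℕ) = (i : ℕ) := congrArg Fin.val hcon
        exact hk (Fin.ext (show (k : ℕ) = (i : ℕ) / 2 by omega))
      · intro hcon
        exact absurd (Finset.mem_univ _) hcon
    · rw [if_neg hpar]
      apply Finset.sum_eq_zero
      intro k _
      rw [if_neg]
      intro hcon
      have hv : 2 * (k : ℕ) = (i : ℕ) := congrArg Fin.val hcon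
      omega
  have hYval : ∀ i : Fin (2 * n),
      (inner ℝ (Yv n c (diagGen n a b (EuclideanSpace.single i 1))) u : ℝ)
      = if (i : ℕ) % 2 = 0 then 0 else (Real.sqrt W)⁻¹ := by
    intro i
    rw [hinner]
    have hterm : ∀ k : Fin n,
        Yv n c (diagGen n a b (EuclideanSpace.single i 1)) k * u k
        = if (⟨2 * (k : ℕ) + 1, by have := k.isLt; omega⟩ : Fin (2 * n)) = i
          then (Real.sqrt W)⁻¹ else 0 := by
      intro k
      unfold Yv diagGen
      simp only [PiLp.toLp_apply]
      rw [if_neg (by omega : ¬ (2 * (k : ℕ) + 1) % 2 = 0)]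
      rw [EuclideanSpace.single_apply]
      have hdd : (2 * (k : ℕ) + 1) / 2 = (k : ℕ) := by omega
      have hdiv : (⟨(2 * (k : ℕ) + 1) / 2, by have := k.isLt; omega⟩ : Fin n) = k :=
        Fin.ext hdd
      rw [hdiv]
      split
      · rw [mul_one, hbc, habu]
      · simp
    rw [Finset.sum_congr rfl (fun k _ => hterm k)]
    by_cases hpar : (i : ℕ) % 2 = 0
    · rw [if_pos hpar]
      apply Finset.sum_eq_zero
      intro k _
      rw [if_neg]
      intro hcon
      have hv : 2 * (k : ℕ) + 1 = (i : ℕ) := congrArg Fin.val hcon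
      omega
    · rw [if_neg hpar]
      have hm : (i : ℕ) / 2 < n := by have := i.isLt; omega
      rw [Finset.sum_eq_single (⟨(i : ℕ) / 2, hm⟩ : Fin n)]
      · rw [if_pos (Fin.ext (show 2 * ((i : ℕ) / 2) + 1 = (i : ℕ) by omega))]
      · intro k _ hk
        rw [if_neg]
        intro hcon
        have hv : 2 * (k : ℕ) + 1 = (i : ℕ) := congrArg Fin.val hcon
        exact hk (Fin.ext (show (k : ℕ) = (i : ℕ) / 2 by omega))
      · intro hcon
        exact absurd (Finset.mem_univ _) hcon
  -- bound on the radius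
  have hWr : (Real.sqrt W ^ 2)⁻¹ < r ^ 2 := by
    rw [hWsq]
    have h1 : W⁻¹ ≤ (n : ℝ)⁻¹ :=
      inv_anti₀ (by exact_mod_cast hn) hWn
    have h2 : (n : ℝ)⁻¹ < r ^ 2 := by rwa [one_div] at hr2
    linarith
  -- the vertices land in the cylinder
  have hvert : ∀ v ∈ {x : EuclideanSpace ℝ (Fin (2 * n)) |
      ∃ i : Fin (2 * n), x = EuclideanSpace.single i (1 : ℝ)
        ∨ x = -EuclideanSpace.single i (1 : ℝ)},
      L v ∈ L ⁻¹' symplCylinder n r → True := fun _ _ _ => trivial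
  have hsingle : ∀ i : Fin (2 * n),
      L (EuclideanSpace.single i 1) ∈ symplCylinder n r := by
    intro i
    have hc0 : coordOr (L (EuclideanSpace.single i 1)) 0
        = (inner ℝ (Xv n c (diagGen n a b (EuclideanSpace.single i 1))) u : ℝ) := by
      unfold coordOr
      rw [dif_pos h01]
      exact hL0 _
    have hc1 : coordOr (L (EuclideanSpace.single i 1)) 1
        = (inner ℝ (Yv n c (diagGen n a b (EuclideanSpace.single i 1))) u : ℝ) := by
      unfold coordOr
      rw [dif_pos h11]
      exact hL1 _
    show coordOr _ 0 ^ 2 + coordOr _ 1 ^ 2 < r ^ 2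
    rw [hc0, hc1, hXval, hYval]
    by_cases hpar : (i : ℕ) % 2 = 0 <;> simp [hpar] <;> linarith [hWr]
  have hsub : crossPolytope (2 * n) ⊆ L ⁻¹' symplCylinder n r := by
    apply convexHull_min ?_ ((cyl_convex n r).linear_preimage L)
    rintro v ⟨i, hv | hv⟩
    · rw [hv]
      exact hsingle i
    · rw [hv]
      show L (-(EuclideanSpace.single i 1)) ∈ symplCylinder n r
      rw [map_neg]
      show coordOr _ 0 ^ 2 + coordOr _ 1 ^ 2 < r ^ 2
      rw [coordOr_neg, coordOr_neg]
      have := hsingle i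
      have h2 : coordOr (L (EuclideanSpace.single i 1)) 0 ^ 2
          + coordOr (L (EuclideanSpace.single i 1)) 1 ^ 2 < r ^ 2 := this
      nlinarith [h2]
  rintro y ⟨w, ⟨x, hx, rfl⟩, rfl⟩
  exact hsub hx

end Stmt15Aux

/-- for `D = diag(a₁,b₁,…,aₙ,bₙ)` positive with `∏ aᵢbᵢ = 1`,
`c^Z_lin(D·B₁^{2n}) ≤ π/n`. -/
theorem statement15 (n : ℕ) (hn : 1 ≤ n) (a b : Fin n → ℝ)
    (ha : ∀ i, 0 < a i) (hb : ∀ i, 0 < b i) (hprod : (∏ i, a i * b i) = 1) :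
    linCylCapacity n (diagGen n a b '' crossPolytope (2 * n)) ≤ Real.pi / n := by
  have hn' : 0 < n := hn
  have hπ : 0 < Real.pi := Real.pi_pos
  have hn0 : (0 : ℝ) < n := by exact_mod_cast hn'
  apply le_of_forall_gt_imp_ge_of_dense
  intro cc hcc
  have hπn : 0 < Real.pi / n := by positivity
  have hcc0 : 0 < cc := lt_trans hπn hcc
  set r := Real.sqrt (cc / Real.pi) with hrdef
  have hr0 : 0 < r := Real.sqrt_pos.2 (by positivity)
  have hr2 : r ^ 2 = cc / Real.pi := Real.sq_sqrt (by positivity)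
  have h1n : 1 / (n : ℝ) < r ^ 2 := by
    rw [hr2, lt_div_iff₀ hπ]
    calc 1 / (n : ℝ) * Real.pi = Real.pi / n := by ring
    _ < cc := hcc
  obtain ⟨S, hS1, hS2⟩ := Stmt15Aux.core n hn' a b ha hb hprod r h1n
  apply csInf_le
  · refine ⟨0, ?_⟩
    rintro x ⟨r', hr', hx, _⟩
    rw [hx]
    positivity
  · exact ⟨r, hr0, by rw [hr2]; field_simp, S, hS1, hS2⟩

end
end

section
/- There exists a universal constant C > 0 such that for every n ≥ 1 and every p with 1 ≤ p ≤ ∞, the linear cylindrical capacity of the unit ball B_p^{2n} of the ℓ_p-norm on ℝ^{2n} satisfies c^Z_lin(B_p^{2n}) ≤ C·π·(Vol(B_p^{2n})/Vol(B^{2n}))^{1/n}, where Vol denotes Lebesgue measure and B^{2n} is the Euclidean unit ball of ℝ^{2n}. -/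
open MeasureTheory Metric
open scoped BigOperators

noncomputable section

/-- The unit ball of the `ℓ_p`-norm on `ℝ^{2n}`, `1 ≤ p ≤ ∞`. -/
def lpBall (n : ℕ) (p : ENNReal) : Set (EuclideanSpace ℝ (Fin (2 * n))) :=
  if p = ⊤ then {x | ∀ i, |x i| ≤ 1}
  else {x | ∑ i, |x i| ^ p.toReal ≤ 1}

section
set_option maxHeartbeats 1000000
namespace Stmt17

/-- Hölder / Jensen inequality for squares. -/
lemma holder_sq {m : ℕ} {q : ℝ} (hq : 1 ≤ q) (a : Fin m → ℝ) :
    (∑ j, a j) ^ 2 ≤ (m : ℝ) ^ (2 - 2 / q) * (∑ j, |a j| ^ q) ^ (2 / q) := by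
  have hq0 : 0 < q := lt_of_lt_of_le one_pos hq
  set A := ∑ j, |a j| with hA_def
  have hA : 0 ≤ A := Finset.sum_nonneg fun _ _ => abs_nonneg _
  have hs : 0 ≤ ∑ j, |a j| ^ q :=
    Finset.sum_nonneg fun _ _ => Real.rpow_nonneg (abs_nonneg _) _
  have h1 : A ^ q ≤ (m : ℝ) ^ (q - 1) * ∑ j, |a j| ^ q := by
    simpa using Real.rpow_sum_le_const_mul_sum_rpow Finset.univ a hq
  have h2 : (∑ j, a j) ^ 2 ≤ A ^ 2 := by
    have h := Finset.abs_sum_le_sum_abs a Finset.univ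
    nlinarith [abs_nonneg (∑ j, a j), sq_abs (∑ j, a j)]
  have hqq : q * (2 / q) = 2 := by field_simp
  have h3 : A ^ (2 : ℕ) = (A ^ q) ^ (2 / q) := by
    rw [← Real.rpow_mul hA, hqq, Real.rpow_two]
  have h4 : (A ^ q) ^ (2 / q) ≤ ((m : ℝ) ^ (q - 1) * ∑ j, |a j| ^ q) ^ (2 / q) :=
    Real.rpow_le_rpow (Real.rpow_nonneg hA q) h1 (by positivity)
  have h5 : ((m : ℝ) ^ (q - 1) * ∑ j, |a j| ^ q) ^ (2 / q)
      = (m : ℝ) ^ (2 - 2 / q) * (∑ j, |a j| ^ q) ^ (2 / q) := by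
    rw [Real.mul_rpow (Real.rpow_nonneg (Nat.cast_nonneg m) _) hs,
      ← Real.rpow_mul (Nat.cast_nonneg m)]
    congr 2
    field_simp
  calc (∑ j, a j) ^ 2 ≤ A ^ 2 := h2
    _ = (A ^ q) ^ (2 / q) := h3
    _ ≤ ((m : ℝ) ^ (q - 1) * ∑ j, |a j| ^ q) ^ (2 / q) := h4
    _ = (m : ℝ) ^ (2 - 2 / q) * (∑ j, |a j| ^ q) ^ (2 / q) := h5

lemma sum_comp_le {m n : ℕ} (f : Fin n → Fin m) (hf : Function.Injective f)
    (g : Fin m → ℝ) (hg : ∀ i, 0 ≤ g i) : ∑ l, g (f l) ≤ ∑ i, g i := by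
  rw [← Finset.sum_image (g := f) (fun x _ y _ h => hf h)]
  exact Finset.sum_le_sum_of_subset_of_nonneg (Finset.subset_univ _) fun i _ _ => hg i


lemma key {n : ℕ} (b : OrthonormalBasis (Fin n) ℝ (EuclideanSpace ℝ (Fin n)))
    (u v : EuclideanSpace ℝ (Fin n)) :
    ∑ k : Fin n, (∑ j, b k j * u j) * (∑ l, b k l * v l) = ∑ j, u j * v j := by
  have h := b.sum_inner_mul_inner u v
  simp only [PiLp.inner_apply, RCLike.inner_apply, starRingEnd_apply, star_trivial] at h
  rw [show ∑ j : Fin n, u j * v j = ∑ j : Fin n, v j * u j from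
    Finset.sum_congr rfl fun j _ => mul_comm _ _, ← h]
  refine Finset.sum_congr rfl fun k _ => ?_
  congr 1
  · exact Finset.sum_congr rfl fun j _ => mul_comm _ _

def mixMap (n : ℕ) (b : Fin n → EuclideanSpace ℝ (Fin n)) :
    EuclideanSpace ℝ (Fin (2 * n)) →ₗ[ℝ] EuclideanSpace ℝ (Fin (2 * n)) where
  toFun x := WithLp.toLp 2 (fun i : Fin (2 * n) => ∑ j : Fin n,
    b ⟨(i : ℕ) / 2, by have := i.isLt; omega⟩ j *
      x ⟨2 * (j : ℕ) + (i : ℕ) % 2, by have := i.isLt; have := j.isLt; omega⟩)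
  map_add' x y := by
    ext i
    simp only [PiLp.add_apply, PiLp.toLp_apply, mul_add, Finset.sum_add_distrib]
  map_smul' c x := by
    ext i
    simp only [PiLp.smul_apply, PiLp.toLp_apply, RingHom.id_apply, smul_eq_mul, Finset.mul_sum]
    exact Finset.sum_congr rfl fun j _ => by ring

lemma mixMap_apply_even {n : ℕ} (b : Fin n → EuclideanSpace ℝ (Fin n))
    (x : EuclideanSpace ℝ (Fin (2 * n))) (j : Fin n) (h : 2 * (j : ℕ) < 2 * n) :
    mixMap n b x ⟨2 * (j : ℕ), h⟩
      = ∑ l : Fin n, b j l * x ⟨2 * (l : ℕ), by have := l.isLt; omega⟩ := by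
  have e1 : (⟨(2 * (j : ℕ)) / 2, by have := j.isLt; omega⟩ : Fin n) = j :=
    Fin.ext (show (2 * (j : ℕ)) / 2 = (j : ℕ) by omega)
  have e2 : ∀ l : Fin n,
      (⟨2 * (l : ℕ) + (2 * (j : ℕ)) % 2, by have := l.isLt; omega⟩ : Fin (2 * n))
        = ⟨2 * (l : ℕ), by have := l.isLt; omega⟩ := fun l =>
    Fin.ext (show 2 * (l : ℕ) + (2 * (j : ℕ)) % 2 = 2 * (l : ℕ) by omega)
  show (∑ l : Fin n,
      b ⟨(2 * (j : ℕ)) / 2, by have := j.isLt; omega⟩ l *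
        x ⟨2 * (l : ℕ) + (2 * (j : ℕ)) % 2, by have := l.isLt; have := j.isLt; omega⟩) = _
  refine Finset.sum_congr rfl fun l _ => ?_
  simp only [e1]
  congr 1
  exact congrArg (fun i : Fin (2 * n) => x i) (e2 l)

lemma mixMap_apply_odd {n : ℕ} (b : Fin n → EuclideanSpace ℝ (Fin n))
    (x : EuclideanSpace ℝ (Fin (2 * n))) (j : Fin n) (h : 2 * (j : ℕ) + 1 < 2 * n) :
    mixMap n b x ⟨2 * (j : ℕ) + 1, h⟩
      = ∑ l : Fin n, b j l * x ⟨2 * (l : ℕ) + 1, by have := l.isLt; omega⟩ := by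
  have e1 : (⟨(2 * (j : ℕ) + 1) / 2, by have := j.isLt; omega⟩ : Fin n) = j :=
    Fin.ext (show (2 * (j : ℕ) + 1) / 2 = (j : ℕ) by omega)
  have e2 : ∀ l : Fin n,
      (⟨2 * (l : ℕ) + (2 * (j : ℕ) + 1) % 2, by have := l.isLt; omega⟩ : Fin (2 * n))
        = ⟨2 * (l : ℕ) + 1, by have := l.isLt; omega⟩ := fun l =>
    Fin.ext (show 2 * (l : ℕ) + (2 * (j : ℕ) + 1) % 2 = 2 * (l : ℕ) + 1 by omega)
  show (∑ l : Fin n,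
      b ⟨(2 * (j : ℕ) + 1) / 2, by have := j.isLt; omega⟩ l *
        x ⟨2 * (l : ℕ) + (2 * (j : ℕ) + 1) % 2, by have := l.isLt; have := j.isLt; omega⟩) = _
  refine Finset.sum_congr rfl fun l _ => ?_
  simp only [e1]
  congr 1
  exact congrArg (fun i : Fin (2 * n) => x i) (e2 l)


lemma mixMap_symplectic {n : ℕ} (b : OrthonormalBasis (Fin n) ℝ (EuclideanSpace ℝ (Fin n))) :
    IsLinearSymplectic n (mixMap n ⇑b) := by
  intro x y
  unfold symplForm
  simp only [mixMap_apply_even, mixMap_apply_odd]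
  have k1 : (∑ k : Fin n,
      (∑ j : Fin n, b k j * x ⟨2 * (j : ℕ), by have := j.isLt; omega⟩) *
        (∑ j : Fin n, b k j * y ⟨2 * (j : ℕ) + 1, by have := j.isLt; omega⟩))
      = ∑ j : Fin n, x ⟨2 * (j : ℕ), by have := j.isLt; omega⟩ *
          y ⟨2 * (j : ℕ) + 1, by have := j.isLt; omega⟩ :=
      key b (WithLp.toLp 2 fun j : Fin n => x ⟨2 * (j : ℕ), by have := j.isLt; omega⟩)
        (WithLp.toLp 2 fun j : Fin n => y ⟨2 * (j : ℕ) + 1, by have := j.isLt; omega⟩)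
  have k2 : (∑ k : Fin n,
      (∑ j : Fin n, b k j * x ⟨2 * (j : ℕ) + 1, by have := j.isLt; omega⟩) *
        (∑ j : Fin n, b k j * y ⟨2 * (j : ℕ), by have := j.isLt; omega⟩))
      = ∑ j : Fin n, x ⟨2 * (j : ℕ) + 1, by have := j.isLt; omega⟩ *
          y ⟨2 * (j : ℕ), by have := j.isLt; omega⟩ :=
      key b (WithLp.toLp 2 fun j : Fin n => x ⟨2 * (j : ℕ) + 1, by have := j.isLt; omega⟩)
        (WithLp.toLp 2 fun j : Fin n => y ⟨2 * (j : ℕ), by have := j.isLt; omega⟩)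
  rw [Finset.sum_sub_distrib, k1, k2, ← Finset.sum_sub_distrib]

lemma exists_basis (n : ℕ) (hn : 0 < n) :
    ∃ b : OrthonormalBasis (Fin n) ℝ (EuclideanSpace ℝ (Fin n)),
      ∀ j, b ⟨0, hn⟩ j = 1 / Real.sqrt n := by
  have hnR : (0 : ℝ) < n := by exact_mod_cast hn
  set w : EuclideanSpace ℝ (Fin n) := WithLp.toLp 2 (fun _ => 1 / Real.sqrt n) with hw
  have hww : ∑ i : Fin n, w i * w i = 1 := by
    have h1 : ∀ i : Fin n, w i * w i = 1 / n := by
      intro i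
      show (1 / Real.sqrt n) * (1 / Real.sqrt n) = 1 / (n : ℝ)
      rw [div_mul_div_comm, one_mul, Real.mul_self_sqrt (le_of_lt hnR)]
    rw [Finset.sum_congr rfl fun i _ => h1 i, Finset.sum_const, Finset.card_univ,
      Fintype.card_fin, nsmul_eq_mul, mul_one_div, div_self (ne_of_gt hnR)]
  have horth : Orthonormal ℝ (({⟨0, hn⟩} : Set (Fin n)).restrict (fun _ : Fin n => w)) := by
    rw [orthonormal_iff_ite]
    intro i j
    have hij : i = j := Subtype.ext ((Set.mem_singleton_iff.mp i.2).trans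
      (Set.mem_singleton_iff.mp j.2).symm)
    subst hij
    simp only [if_pos rfl, Set.restrict_apply]
    rw [PiLp.inner_apply]
    change ∑ x : Fin n, inner ℝ (w x) (w x) = (1 : ℝ)
    simpa [sq] using hww
  have hcard : Module.finrank ℝ (EuclideanSpace ℝ (Fin n)) = Fintype.card (Fin n) := by
    simp [finrank_euclideanSpace_fin]
  obtain ⟨b, hb⟩ := horth.exists_orthonormalBasis_extension_of_card_eq hcard
  refine ⟨b, fun j => ?_⟩
  rw [hb ⟨0, hn⟩ (Set.mem_singleton _)]


lemma linCylCapacity_le {n : ℕ} (U : Set (EuclideanSpace ℝ (Fin (2 * n)))) {r : ℝ} (hr : 0 < r)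
    (S : EuclideanSpace ℝ (Fin (2 * n)) →ₗ[ℝ] EuclideanSpace ℝ (Fin (2 * n)))
    (hS : IsLinearSymplectic n S) (h : S '' U ⊆ symplCylinder n r) :
    linCylCapacity n U ≤ Real.pi * r ^ 2 := by
  apply csInf_le
  · refine ⟨0, ?_⟩
    rintro c ⟨r', hr', rfl, -⟩
    positivity
  · exact ⟨r, hr, rfl, S, hS, h⟩

lemma abs_coord_le_one {n : ℕ} {p : ENNReal} (hp : 1 ≤ p) {x : EuclideanSpace ℝ (Fin (2 * n))}
    (hx : x ∈ lpBall n p) (i : Fin (2 * n)) : |x i| ≤ 1 := by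
  by_cases hptop : p = ⊤
  · rw [lpBall, if_pos hptop] at hx
    exact hx i
  · rw [lpBall, if_neg hptop] at hx
    have hq : 1 ≤ p.toReal := by
      have := ENNReal.toReal_mono hptop hp
      simpa using this
    have hterm : |x i| ^ p.toReal ≤ 1 :=
      le_trans (Finset.single_le_sum (fun j _ => Real.rpow_nonneg (abs_nonneg _) _)
        (Finset.mem_univ i)) hx
    by_contra hgt
    push_neg at hgt
    have h1 : 1 < |x i| ^ p.toReal :=
      (Real.one_lt_rpow_iff_of_pos (lt_trans one_pos hgt)).mpr
        (Or.inl ⟨hgt, by linarith⟩)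
    linarith

lemma lpBall_subset_closedBall {n : ℕ} {p : ENNReal} (hp : 1 ≤ p) :
    lpBall n p ⊆ closedBall 0 (Real.sqrt (2 * (n : ℝ))) := by
  intro x hx
  rw [mem_closedBall, dist_zero_right, EuclideanSpace.norm_eq]
  apply Real.sqrt_le_sqrt
  calc ∑ i, ‖x i‖ ^ 2 ≤ ∑ _i : Fin (2 * n), (1 : ℝ) := by
        refine Finset.sum_le_sum fun i _ => ?_
        have := abs_coord_le_one hp hx i
        rw [Real.norm_eq_abs]
        nlinarith [abs_nonneg (x i)]
    _ = 2 * (n : ℝ) := by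
        rw [Finset.sum_const, Finset.card_univ, Fintype.card_fin, nsmul_eq_mul, mul_one]
        push_cast
        ring

lemma volume_lpBall_ne_top {n : ℕ} {p : ENNReal} (hp : 1 ≤ p) :
    volume (lpBall n p) ≠ ⊤ :=
  ne_top_of_le_ne_top measure_closedBall_lt_top.ne
    (measure_mono (lpBall_subset_closedBall hp))

lemma v1_pos (n : ℕ) :
    0 < (volume (closedBall (0 : EuclideanSpace ℝ (Fin (2 * n))) 1)).toReal := by
  apply ENNReal.toReal_pos
  · exact (lt_of_lt_of_le (measure_ball_pos volume 0 one_pos)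
      (measure_mono ball_subset_closedBall)).ne'
  · exact measure_closedBall_lt_top.ne

lemma le_volRatio {n : ℕ} {K : Set (EuclideanSpace ℝ (Fin (2 * n)))} {ρ : ℝ} (hρ : 0 ≤ ρ)
    (hK : closedBall 0 ρ ⊆ K) (htop : volume K ≠ ⊤) : ρ ^ (2 * n) ≤ volRatio K := by
  have hball : volume (closedBall (0 : EuclideanSpace ℝ (Fin (2 * n))) ρ)
      = ENNReal.ofReal (ρ ^ (2 * n)) * volume (closedBall (0 : EuclideanSpace ℝ (Fin (2 * n))) 1) := by
    rw [Measure.addHaar_closedBall' (volume : Measure (EuclideanSpace ℝ (Fin (2 * n)))) (0 : EuclideanSpace ℝ (Fin (2 * n))) hρ,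
      finrank_euclideanSpace_fin]
  have h1 : (volume (closedBall (0 : EuclideanSpace ℝ (Fin (2 * n))) ρ)).toReal
      = ρ ^ (2 * n) * (volume (closedBall (0 : EuclideanSpace ℝ (Fin (2 * n))) 1)).toReal := by
    rw [hball, ENNReal.toReal_mul, ENNReal.toReal_ofReal (by positivity)]
  have h2 : (volume (closedBall (0 : EuclideanSpace ℝ (Fin (2 * n))) ρ)).toReal
      ≤ (volume K).toReal := ENNReal.toReal_mono htop (measure_mono hK)
  unfold volRatio
  rw [le_div_iff₀ (v1_pos n)]
  linarith [h1, h2]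


lemma sum_abs_sq_le {m : ℕ} {x : EuclideanSpace ℝ (Fin m)} {ρ : ℝ}
    (hx : x ∈ closedBall 0 ρ) : ∑ i, |x i| ^ 2 ≤ ρ ^ 2 := by
  rw [mem_closedBall, dist_zero_right] at hx
  have h1 : ‖x‖ ^ 2 ≤ ρ ^ 2 := by nlinarith [norm_nonneg x]
  have h2 : ‖x‖ ^ 2 = ∑ i, |x i| ^ 2 := by
    rw [EuclideanSpace.norm_eq, Real.sq_sqrt (Finset.sum_nonneg fun i _ => sq_nonneg _)]
    exact Finset.sum_congr rfl fun i _ => by rw [Real.norm_eq_abs]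
  linarith

lemma identity_case {n : ℕ} (hn : 0 < n) {p : ENNReal} (hp : 1 ≤ p)
    (hsub : closedBall 0 1 ⊆ lpBall n p) :
    linCylCapacity n (lpBall n p) ≤ 8 * Real.pi * volRatio (lpBall n p) ^ ((1 : ℝ) / n) := by
  have hπ := Real.pi_pos
  have hratio : (1 : ℝ) ≤ volRatio (lpBall n p) := by
    have h := le_volRatio zero_le_one hsub (volume_lpBall_ne_top hp)
    simpa using h
  have hr1 : (1 : ℝ) ≤ volRatio (lpBall n p) ^ ((1 : ℝ) / n) :=
    Real.one_le_rpow hratio (by positivity)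
  have hcap : linCylCapacity n (lpBall n p) ≤ Real.pi * Real.sqrt 3 ^ 2 := by
    apply linCylCapacity_le _ (Real.sqrt_pos.mpr (by norm_num)) LinearMap.id (fun u v => rfl)
    rintro z ⟨x, hx, rfl⟩
    simp only [LinearMap.id_coe, id_eq]
    show coordOr x 0 ^ 2 + coordOr x 1 ^ 2 < Real.sqrt 3 ^ 2
    rw [Real.sq_sqrt (by norm_num : (0:ℝ) ≤ 3)]
    have h0 : (0 : ℕ) < 2 * n := by omega
    have h1 : (1 : ℕ) < 2 * n := by omega
    have e0 : coordOr x 0 = x ⟨0, h0⟩ := dif_pos h0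
    have e1 : coordOr x 1 = x ⟨1, h1⟩ := dif_pos h1
    rw [e0, e1]
    have b0 := abs_coord_le_one hp hx ⟨0, h0⟩
    have b1 := abs_coord_le_one hp hx ⟨1, h1⟩
    nlinarith [abs_nonneg (x ⟨0, h0⟩), abs_nonneg (x ⟨1, h1⟩),
      sq_abs (x ⟨0, h0⟩), sq_abs (x ⟨1, h1⟩)]
  calc linCylCapacity n (lpBall n p) ≤ Real.pi * Real.sqrt 3 ^ 2 := hcap
    _ = 3 * Real.pi := by rw [Real.sq_sqrt (by norm_num : (0:ℝ) ≤ 3)]; ring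
    _ ≤ 8 * Real.pi * volRatio (lpBall n p) ^ ((1 : ℝ) / n) := by nlinarith

lemma ball_subset_lpBall_top {n : ℕ} :
    closedBall 0 1 ⊆ lpBall n (⊤ : ENNReal) := by
  intro x hx
  rw [lpBall, if_pos rfl]
  intro i
  have hs := sum_abs_sq_le hx
  have hterm : |x i| ^ 2 ≤ 1 := by
    refine le_trans (Finset.single_le_sum (f := fun j : Fin (2 * n) => |x j| ^ 2)
      (fun j _ => sq_nonneg _) (Finset.mem_univ i)) ?_
    simpa using hs
  nlinarith [abs_nonneg (x i)]

lemma ball_subset_lpBall_big {n : ℕ} {p : ENNReal} (hptop : p ≠ ⊤) (hq2 : 2 ≤ p.toReal) :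
    closedBall 0 1 ⊆ lpBall n p := by
  intro x hx
  rw [lpBall, if_neg hptop]
  show ∑ i, |x i| ^ p.toReal ≤ 1
  have hs : ∑ i, |x i| ^ 2 ≤ 1 := by simpa using sum_abs_sq_le hx
  have habs : ∀ i : Fin (2 * n), |x i| ≤ 1 := by
    intro i
    have hterm : |x i| ^ 2 ≤ 1 :=
      le_trans (Finset.single_le_sum (f := fun j : Fin (2 * n) => |x j| ^ 2)
        (fun j _ => sq_nonneg _) (Finset.mem_univ i)) hs
    nlinarith [abs_nonneg (x i)]
  have hterm : ∀ i : Fin (2 * n), |x i| ^ p.toReal ≤ |x i| ^ 2 := by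
    intro i
    rcases eq_or_lt_of_le (abs_nonneg (x i)) with h | h
    · rw [← h, Real.zero_rpow (by linarith : p.toReal ≠ 0)]
      positivity
    · have := Real.rpow_le_rpow_of_exponent_ge h (habs i) hq2
      rwa [Real.rpow_two] at this
  exact le_trans (Finset.sum_le_sum fun i _ => hterm i) hs


lemma small_case {n : ℕ} (hn : 0 < n) {p : ENNReal} (hp : 1 ≤ p) (hptop : p ≠ ⊤)
    (hq2 : p.toReal ≤ 2) :
    linCylCapacity n (lpBall n p) ≤ 8 * Real.pi * volRatio (lpBall n p) ^ ((1 : ℝ) / n) := by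
  have hq1 : 1 ≤ p.toReal := by
    have := ENNReal.toReal_mono hptop hp
    simpa using this
  set q : ℝ := p.toReal with hqdef
  have hq0 : 0 < q := lt_of_lt_of_le one_pos hq1
  have hπ := Real.pi_pos
  have hnR : (0 : ℝ) < n := by exact_mod_cast hn
  set e : ℝ := 1 - 2 / q with he
  have hdiv1 : 1 ≤ 2 / q := (one_le_div hq0).mpr hq2
  have hdiv2 : 2 / q ≤ 2 := by
    rw [div_le_iff₀ hq0]; nlinarith
  have he0 : e ≤ 0 := by rw [he]; linarith
  have he1 : -1 ≤ e := by rw [he]; linarith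
  have hne : (0 : ℝ) < (n : ℝ) ^ e := Real.rpow_pos_of_pos hnR e
  obtain ⟨b, hb0⟩ := exists_basis n hn
  set r : ℝ := 2 * Real.sqrt ((n : ℝ) ^ e) with hrdef
  have hrpos : 0 < r := by rw [hrdef]; positivity
  have hr2 : r ^ 2 = 4 * (n : ℝ) ^ e := by
    rw [hrdef, mul_pow, Real.sq_sqrt hne.le]; ring
  have hcap : linCylCapacity n (lpBall n p) ≤ Real.pi * r ^ 2 := by
    apply linCylCapacity_le _ hrpos (mixMap n ⇑b) (mixMap_symplectic b)
    rintro z ⟨x, hx, rfl⟩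
    show coordOr (mixMap n ⇑b x) 0 ^ 2 + coordOr (mixMap n ⇑b x) 1 ^ 2 < r ^ 2
    have hx' : ∑ i, |x i| ^ q ≤ 1 := by
      rw [lpBall, if_neg hptop] at hx
      exact hx
    have h02 : (0 : ℕ) < 2 * n := by omega
    have h12 : (1 : ℕ) < 2 * n := by omega
    have h0lt : 2 * (((⟨0, hn⟩ : Fin n) : ℕ)) < 2 * n := by
      show 2 * 0 < 2 * n; omega
    have h1lt : 2 * (((⟨0, hn⟩ : Fin n) : ℕ)) + 1 < 2 * n := by
      show 2 * 0 + 1 < 2 * n; omega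
    have e0 : coordOr (mixMap n ⇑b x) 0
        = mixMap n ⇑b x ⟨2 * (((⟨0, hn⟩ : Fin n) : ℕ)), h0lt⟩ := by
      exact dif_pos h02
    have e1 : coordOr (mixMap n ⇑b x) 1
        = mixMap n ⇑b x ⟨2 * (((⟨0, hn⟩ : Fin n) : ℕ)) + 1, h1lt⟩ := by
      exact dif_pos h12
    have c0 : coordOr (mixMap n ⇑b x) 0
        = (1 / Real.sqrt n) * ∑ l : Fin n, x ⟨2 * (l : ℕ), by have := l.isLt; omega⟩ := by
      rw [e0, mixMap_apply_even]
      simp only [hb0]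
      rw [← Finset.mul_sum]
    have c1 : coordOr (mixMap n ⇑b x) 1
        = (1 / Real.sqrt n) * ∑ l : Fin n, x ⟨2 * (l : ℕ) + 1, by have := l.isLt; omega⟩ := by
      rw [e1, mixMap_apply_odd]
      simp only [hb0]
      rw [← Finset.mul_sum]
    have hs0 : ∑ l : Fin n, |x ⟨2 * (l : ℕ), by have := l.isLt; omega⟩| ^ q ≤ 1 := by
      refine le_trans (sum_comp_le (fun l : Fin n => ⟨2 * (l : ℕ), by have := l.isLt; omega⟩)
        (fun a c h => Fin.ext (by have := congrArg Fin.val h; simp only [] at this; omega))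
        (fun i => |x i| ^ q) (fun i => Real.rpow_nonneg (abs_nonneg _) _)) hx'
    have hs1 : ∑ l : Fin n, |x ⟨2 * (l : ℕ) + 1, by have := l.isLt; omega⟩| ^ q ≤ 1 := by
      refine le_trans (sum_comp_le (fun l : Fin n => ⟨2 * (l : ℕ) + 1, by have := l.isLt; omega⟩)
        (fun a c h => Fin.ext (by have := congrArg Fin.val h; simp only [] at this; omega))
        (fun i => |x i| ^ q) (fun i => Real.rpow_nonneg (abs_nonneg _) _)) hx'
    have hT0 : (∑ l : Fin n, x ⟨2 * (l : ℕ), by have := l.isLt; omega⟩) ^ 2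
        ≤ (n : ℝ) ^ (2 - 2 / q) := by
      have h := holder_sq hq1 (fun l : Fin n => x ⟨2 * (l : ℕ), by have := l.isLt; omega⟩)
      have h2 : (∑ l : Fin n, |x ⟨2 * (l : ℕ), by have := l.isLt; omega⟩| ^ q) ^ (2 / q) ≤ 1 :=
        Real.rpow_le_one (Finset.sum_nonneg fun _ _ => Real.rpow_nonneg (abs_nonneg _) _)
          hs0 (by positivity)
      have h3 : (0:ℝ) ≤ (n : ℝ) ^ (2 - 2 / q) := Real.rpow_nonneg hnR.le _
      nlinarith
    have hT1 : (∑ l : Fin n, x ⟨2 * (l : ℕ) + 1, by have := l.isLt; omega⟩) ^ 2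
        ≤ (n : ℝ) ^ (2 - 2 / q) := by
      have h := holder_sq hq1 (fun l : Fin n => x ⟨2 * (l : ℕ) + 1, by have := l.isLt; omega⟩)
      have h2 : (∑ l : Fin n, |x ⟨2 * (l : ℕ) + 1, by have := l.isLt; omega⟩| ^ q) ^ (2 / q) ≤ 1 :=
        Real.rpow_le_one (Finset.sum_nonneg fun _ _ => Real.rpow_nonneg (abs_nonneg _) _)
          hs1 (by positivity)
      have h3 : (0:ℝ) ≤ (n : ℝ) ^ (2 - 2 / q) := Real.rpow_nonneg hnR.le _
      nlinarith
    have hsplit : (n : ℝ) ^ (2 - 2 / q) = (n : ℝ) * (n : ℝ) ^ e := by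
      rw [show (2 - 2 / q : ℝ) = 1 + e by rw [he]; ring, Real.rpow_add hnR, Real.rpow_one]
    have hsq : (1 / Real.sqrt n : ℝ) ^ 2 = 1 / (n : ℝ) := by
      rw [div_pow, one_pow, Real.sq_sqrt hnR.le]
    rw [c0, c1, hr2, mul_pow, mul_pow, hsq]
    have hb1 : (1 / (n : ℝ)) * ((∑ l : Fin n, x ⟨2 * (l : ℕ), by have := l.isLt; omega⟩) ^ 2)
        ≤ (n : ℝ) ^ e := by
      rw [div_mul_eq_mul_div, one_mul, div_le_iff₀ hnR]
      calc (∑ l : Fin n, x ⟨2 * (l : ℕ), by have := l.isLt; omega⟩) ^ 2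
          ≤ (n : ℝ) ^ (2 - 2 / q) := hT0
        _ = (n : ℝ) * (n : ℝ) ^ e := hsplit
        _ = (n : ℝ) ^ e * (n : ℝ) := by ring
    have hb2 : (1 / (n : ℝ)) * ((∑ l : Fin n, x ⟨2 * (l : ℕ) + 1, by have := l.isLt; omega⟩) ^ 2)
        ≤ (n : ℝ) ^ e := by
      rw [div_mul_eq_mul_div, one_mul, div_le_iff₀ hnR]
      calc (∑ l : Fin n, x ⟨2 * (l : ℕ) + 1, by have := l.isLt; omega⟩) ^ 2
          ≤ (n : ℝ) ^ (2 - 2 / q) := hT1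
        _ = (n : ℝ) * (n : ℝ) ^ e := hsplit
        _ = (n : ℝ) ^ e * (n : ℝ) := by ring
    nlinarith [hb1, hb2, hne]
  have h2nR : (0 : ℝ) < 2 * (n : ℝ) := by linarith
  set ρ : ℝ := (2 * (n : ℝ)) ^ (e / 2) with hρdef
  have hρpos : 0 < ρ := Real.rpow_pos_of_pos h2nR _
  have hρsq : ρ ^ 2 = (2 * (n : ℝ)) ^ e := by
    rw [hρdef, ← Real.rpow_natCast ((2 * (n : ℝ)) ^ (e / 2)) 2, ← Real.rpow_mul h2nR.le]
    congr 1
    push_cast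
    ring
  have hsub : closedBall 0 ρ ⊆ lpBall n p := by
    intro x hx
    rw [lpBall, if_neg hptop]
    show ∑ i, |x i| ^ q ≤ 1
    have hxsum : ∑ i, |x i| ^ 2 ≤ ρ ^ 2 := sum_abs_sq_le hx
    by_contra hgt
    push_neg at hgt
    have hSq0 : (0 : ℝ) < ∑ i, |x i| ^ q := lt_trans one_pos hgt
    have hJ : (∑ i, |x i| ^ q) ^ (2 / q)
        ≤ (2 * (n : ℝ)) ^ (2 / q - 1) * ∑ i, (|x i| ^ q) ^ (2 / q) := by
      have h := Real.rpow_sum_le_const_mul_sum_rpow Finset.univ (fun i => |x i| ^ q) hdiv1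
      have habs : ∀ i : Fin (2 * n), |(|x i| ^ q)| = |x i| ^ q := fun i =>
        abs_of_nonneg (Real.rpow_nonneg (abs_nonneg _) _)
      simp only [habs, Finset.card_univ, Fintype.card_fin] at h
      have hcast : ((2 * n : ℕ) : ℝ) = 2 * (n : ℝ) := by push_cast; ring
      rwa [hcast] at h
    have hcollapse : ∀ i : Fin (2 * n), (|x i| ^ q) ^ (2 / q) = |x i| ^ 2 := by
      intro i
      rw [← Real.rpow_mul (abs_nonneg _), show q * (2 / q) = ((2 : ℕ) : ℝ) by
        push_cast; field_simp, Real.rpow_natCast]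
    rw [Finset.sum_congr rfl fun i _ => hcollapse i] at hJ
    have hmul : (2 * (n : ℝ)) ^ (2 / q - 1) * (∑ i, |x i| ^ 2)
        ≤ (2 * (n : ℝ)) ^ (2 / q - 1) * ((2 * (n : ℝ)) ^ e) := by
      refine mul_le_mul_of_nonneg_left ?_ (Real.rpow_nonneg h2nR.le _)
      rw [← hρsq]; exact hxsum
    have hone : (2 * (n : ℝ)) ^ (2 / q - 1) * (2 * (n : ℝ)) ^ e = 1 := by
      rw [← Real.rpow_add h2nR, show (2 / q - 1) + e = 0 by rw [he]; ring, Real.rpow_zero]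
    have hgt2 : 1 < (∑ i, |x i| ^ q) ^ (2 / q) :=
      (Real.one_lt_rpow_iff_of_pos hSq0).mpr (Or.inl ⟨hgt, by positivity⟩)
    linarith
  have hvol := le_volRatio hρpos.le hsub (volume_lpBall_ne_top hp)
  have hratio : (1 / 2 : ℝ) * (n : ℝ) ^ e ≤ volRatio (lpBall n p) ^ ((1 : ℝ) / n) := by
    have h1 : (ρ ^ (2 * n) : ℝ) ^ ((1 : ℝ) / n) ≤ volRatio (lpBall n p) ^ ((1 : ℝ) / n) :=
      Real.rpow_le_rpow (by positivity) hvol (by positivity)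
    have h2 : (ρ ^ (2 * n) : ℝ) ^ ((1 : ℝ) / n) = (2 * (n : ℝ)) ^ e := by
      rw [← Real.rpow_natCast ρ (2 * n), ← Real.rpow_mul hρpos.le,
        show ((2 * n : ℕ) : ℝ) * ((1 : ℝ) / n) = ((2 : ℕ) : ℝ) by
          push_cast; field_simp, Real.rpow_natCast]
      exact hρsq
    have h3 : (2 * (n : ℝ)) ^ e = 2 ^ e * (n : ℝ) ^ e := Real.mul_rpow (by norm_num) hnR.le
    have h4 : (1 / 2 : ℝ) ≤ (2 : ℝ) ^ e := by
      have h5 := Real.rpow_le_rpow_of_exponent_le (by norm_num : (1 : ℝ) ≤ 2) he1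
      rw [Real.rpow_neg_one] at h5
      norm_num at h5
      linarith
    nlinarith [hne]
  calc linCylCapacity n (lpBall n p) ≤ Real.pi * r ^ 2 := hcap
    _ = 4 * Real.pi * (n : ℝ) ^ e := by rw [hr2]; ring
    _ ≤ 8 * Real.pi * volRatio (lpBall n p) ^ ((1 : ℝ) / n) := by nlinarith [hπ, hratio]

end Stmt17
end

/-- there is a universal constant `C` with
`c^Z_lin(B_p^{2n}) ≤ C·π·(Vol(B_p^{2n})/Vol(B^{2n}))^{1/n}` for all `n ≥ 1`, `1 ≤ p ≤ ∞`. -/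
theorem statement17 :
    ∃ C : ℝ, 0 < C ∧ ∀ n : ℕ, 1 ≤ n → ∀ p : ENNReal, 1 ≤ p →
      linCylCapacity n (lpBall n p) ≤
        C * Real.pi * volRatio (lpBall n p) ^ ((1 : ℝ) / n) := by
  refine ⟨8, by norm_num, ?_⟩
  intro n hn p hp
  by_cases hptop : p = ⊤
  · subst hptop
    exact Stmt17.identity_case hn hp Stmt17.ball_subset_lpBall_top
  · rcases le_or_gt p.toReal 2 with h2 | h2
    · exact Stmt17.small_case hn hp hptop h2
    · exact Stmt17.identity_case hn hp (Stmt17.ball_subset_lpBall_big hptop h2.le)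

end
end
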